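/- Let P be the first-return map of the Collatz map on N1 ∪ N2, H a complex Hilbert space with orthonormal basis {e_n}_{n ∈ N1∪N2}, T1, T2 the bounded operators with T1 e_n = e_{P(n)} for n ∈ N1, T1 e_n = 0 for n ∈ N2, T2 e_n = e_{P(n)} for n ∈ N2, T2 e_n = 0 for n ∈ N1, and S1 = T1*T2*, S2 = T2*. Then for every n ∈ N1 ∪ N2, the closure of C*(S1,S2)·e_n equals the closed linear span of {e_m : m ∈ N1 ∪ N2, m ~ n}, where ~ is the orbit equivalence relation induced by P. -/

import Mathlib

/-!
`T₁` and `T₂` shift the basis along `P` on `N₁` and on `N₂` respectively. `P` is injective on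
each of the two pieces and maps `N₁` into `N₂`, so `T₂† T₂ T₁ = T₁`, and hence both `T₁` and
`T₂` lie in `C*(S₁, S₂)`.

The orbit class `E` of `n` satisfies `P⁻¹ E = E`, so the closed span of `{eₘ : m ∈ E}` is
invariant under `T₁`, `T₂` and their adjoints, hence under the whole algebra; this gives `⊆`.
Conversely, a product `W` of `T₁`'s and `T₂`'s carries `eₓ` to `e_{Pᵏ x}` and `W†` carries it
back, so if `Pᵃ m = Pᶜ n` then `eₘ = W_a† W_c eₙ`; this gives `⊇`.
-/

/-- The Collatz map on positive integers: `3n+1` for odd `n`, `n/2` for even `n`. -/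
def collatz (n : ℕ+) : ℕ+ :=
  if h : (n : ℕ) % 2 = 1 then 3 * n + 1
  else ⟨(n : ℕ) / 2, by
    have h2 : 0 < n.1 := n.2
    have h3 : ¬ n.1 % 2 = 1 := h
    show 0 < n.1 / 2
    omega⟩

/-- The forward orbit of `x` under `f`. -/
def orbit {X : Type*} (f : X → X) (x : X) : Set X := Set.range fun k => f^[k] x

/-- The orbit equivalence relation induced by `f`: `x ~ y` iff the orbits meet. -/
def orbEquiv {X : Type*} (f : X → X) (x y : X) : Prop :=
  (orbit f x ∩ orbit f y).Nonempty

/-- `N₁ = {n : n ≡ 1, 5 (mod 6)}`. -/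
def N1 : Set ℕ+ := {n : ℕ+ | (n : ℕ) % 6 = 1 ∨ (n : ℕ) % 6 = 5}

/-- `N₂ = {n : n ≡ 4, 16 (mod 18)}`. -/
def N2 : Set ℕ+ := {n : ℕ+ | (n : ℕ) % 18 = 4 ∨ (n : ℕ) % 18 = 16}

/-- `y` is the first return of `x` to `S` under iteration of `f`: for some `k ≥ 1`,
`y = f^[k] x ∈ S` and no earlier positive iterate of `x` lies in `S`. -/
def IsFirstReturn {X : Type*} (f : X → X) (S : Set X) (x y : X) : Prop :=
  ∃ k : ℕ, 0 < k ∧ f^[k] x ∈ S ∧ y = f^[k] x ∧ ∀ j : ℕ, 0 < j → j < k → f^[j] x ∉ S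

/-- The C*-algebra of operators generated by a set `S` of bounded operators on a complex
Hilbert space: the closure of the (non-unital) star subalgebra generated by `S`. -/
noncomputable def CstarGen {H : Type*} [NormedAddCommGroup H] [InnerProductSpace ℂ H]
    [CompleteSpace H] (S : Set (H →L[ℂ] H)) : Set (H →L[ℂ] H) :=
  closure (NonUnitalStarAlgebra.adjoin ℂ S : Set (H →L[ℂ] H))

open Set
open scoped InnerProductSpace InnerProduct

section OrbitEquivalence

variable {X : Type*}

theorem orbEquiv_refl (f : X → X) (x : X) : orbEquiv f x x :=
  ⟨x, ⟨0, rfl⟩, ⟨0, rfl⟩⟩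

theorem orbEquiv_apply_left_iff (f : X → X) (x y : X) :
    orbEquiv f (f x) y ↔ orbEquiv f x y := by
  constructor
  · rintro ⟨z, ⟨a, rfl⟩, hz⟩
    exact ⟨_, ⟨a + 1, Function.iterate_succ_apply f a x⟩, hz⟩
  · rintro ⟨z, ⟨a, rfl⟩, ⟨c, hc⟩⟩
    refine ⟨f (f^[a] x), ⟨a, ?_⟩, ⟨c + 1, ?_⟩⟩
    · exact Function.Commute.iterate_self f a x
    · simp only [Function.iterate_succ_apply', hc]

theorem preimage_setOf_orbEquiv (f : X → X) (y : X) :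
    f ⁻¹' {x | orbEquiv f x y} = {x | orbEquiv f x y} :=
  Set.ext fun x => orbEquiv_apply_left_iff f x y

end OrbitEquivalence

def Submodule.reducingOperators {𝕜 H : Type*} [RCLike 𝕜] [NormedAddCommGroup H]
    [InnerProductSpace 𝕜 H] [CompleteSpace H] (V : Submodule 𝕜 H) :
    NonUnitalStarSubalgebra 𝕜 (H →L[𝕜] H) where
  carrier := {A : H →L[𝕜] H | MapsTo A V V ∧ MapsTo ⇑(star A) V V}
  add_mem' {A B} hA hB :=
    ⟨fun _ hv => V.add_mem (hA.1 hv) (hB.1 hv), fun _ hv => by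
      rw [star_add]
      exact V.add_mem (hA.2 hv) (hB.2 hv)⟩
  zero_mem' := ⟨fun _ _ => V.zero_mem, fun _ _ => by simp⟩
  mul_mem' {A B} hA hB :=
    ⟨fun _ hv => hA.1 (hB.1 hv), fun _ hv => by
      rw [star_mul]
      exact hB.2 (hA.2 hv)⟩
  smul_mem' c A hA :=
    ⟨fun _ hv => V.smul_mem c (hA.1 hv), fun _ hv => by
      rw [star_smul]
      exact V.smul_mem _ (hA.2 hv)⟩
  star_mem' {A} hA := ⟨hA.2, by simpa only [star_star] using hA.1⟩

namespace HilbertBasis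

variable {ι 𝕜 H : Type*} [RCLike 𝕜] [NormedAddCommGroup H] [InnerProductSpace 𝕜 H]
  (b : HilbertBasis ι 𝕜 H)

theorem ext_inner {x y : H} (h : ∀ i, ⟪b i, x⟫_𝕜 = ⟪b i, y⟫_𝕜) : x = y :=
  b.repr.injective <| lp.ext <| funext fun i => by
    rw [b.repr_apply_apply, b.repr_apply_apply, h i]

theorem ext_continuousLinearMap {F : Type*} [NormedAddCommGroup F] [NormedSpace 𝕜 F]
    {A B : H →L[𝕜] F} (h : ∀ i, A (b i) = B (b i)) : A = B :=
  ContinuousLinearMap.ext_on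
    (Submodule.dense_iff_topologicalClosure_eq_top.mpr b.dense_span) (forall_mem_range.mpr h)

theorem mem_closure_span_image_iff {E : Set ι} {x : H} :
    x ∈ (Submodule.span 𝕜 (b '' E)).topologicalClosure ↔ ∀ i ∉ E, ⟪b i, x⟫_𝕜 = 0 := by
  classical
  constructor
  · intro hx i hi
    have hle : (Submodule.span 𝕜 (b '' E)).topologicalClosure ≤
        LinearMap.ker (innerSL 𝕜 (b i) : H →ₗ[𝕜] 𝕜) := by
      refine Submodule.topologicalClosure_minimal _ ?_ (ContinuousLinearMap.isClosed_ker _)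
      rw [Submodule.span_le]
      rintro _ ⟨j, hj, rfl⟩
      have hij : i ≠ j := fun h => hi (h ▸ hj)
      simpa using b.orthonormal.inner_eq_zero hij
    simpa using hle hx
  · intro h
    rw [← SetLike.mem_coe, Submodule.topologicalClosure_coe]
    refine mem_closure_of_tendsto (b.hasSum_repr x) (Filter.Eventually.of_forall fun s => ?_)
    refine Submodule.sum_mem _ fun i _ => ?_
    by_cases hi : i ∈ E
    · exact Submodule.smul_mem _ _ (Submodule.subset_span (mem_image_of_mem b hi))
    · rw [b.repr_apply_apply, h i hi, zero_smul]
      exact zero_mem _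

structure IsPartialShift (P : ι → ι) (D : Set ι) (T : H →L[𝕜] H) : Prop where
  apply_of_mem : ∀ i ∈ D, T (b i) = b (P i)
  apply_of_notMem : ∀ i ∉ D, T (b i) = 0

variable {b} {P : ι → ι} {D D' E : Set ι} {T T₁ T₂ : H →L[𝕜] H}

theorem IsPartialShift.mapsTo_closure_span (hT : b.IsPartialShift P D T) (hE : MapsTo P E E) :
    MapsTo T (Submodule.span 𝕜 (b '' E)).topologicalClosure
      (Submodule.span 𝕜 (b '' E)).topologicalClosure := by
  set V := (Submodule.span 𝕜 (b '' E)).topologicalClosure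
  have hspan : Submodule.span 𝕜 (b '' E) ≤ V.comap (T : H →ₗ[𝕜] H) := by
    rw [Submodule.span_le]
    rintro _ ⟨i, hi, rfl⟩
    by_cases hiD : i ∈ D
    · rw [SetLike.mem_coe, Submodule.mem_comap, ContinuousLinearMap.coe_coe,
        hT.apply_of_mem i hiD]
      exact Submodule.le_topologicalClosure _ (Submodule.subset_span (mem_image_of_mem b (hE hi)))
    · simp [hT.apply_of_notMem i hiD]
  exact fun v hv => Submodule.topologicalClosure_minimal _ hspan
    (Submodule.isClosed_topologicalClosure _ |>.preimage T.continuous) hv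

variable [CompleteSpace H]

theorem IsPartialShift.mapsTo_adjoint_closure_span (hT : b.IsPartialShift P D T)
    (hE : MapsTo P Eᶜ Eᶜ) :
    MapsTo (T†) (Submodule.span 𝕜 (b '' E)).topologicalClosure
      (Submodule.span 𝕜 (b '' E)).topologicalClosure := by
  intro v hv
  rw [SetLike.mem_coe, b.mem_closure_span_image_iff] at hv ⊢
  intro i hi
  rw [ContinuousLinearMap.adjoint_inner_right]
  by_cases hiD : i ∈ D
  · rw [hT.apply_of_mem i hiD]
    exact hv _ (hE hi)
  · rw [hT.apply_of_notMem i hiD, inner_zero_left]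

theorem IsPartialShift.mem_reducingOperators (hT : b.IsPartialShift P D T) (hE : P ⁻¹' E = E) :
    T ∈ (Submodule.span 𝕜 (b '' E)).topologicalClosure.reducingOperators :=
  ⟨hT.mapsTo_closure_span fun _ hi => hE.ge hi, by
    rw [ContinuousLinearMap.star_eq_adjoint]
    exact hT.mapsTo_adjoint_closure_span fun _ hi hPi => hi (hE.le hPi)⟩

theorem IsPartialShift.adjoint_apply (hT : b.IsPartialShift P D T) (hP : InjOn P D) {i : ι}
    (hi : i ∈ D) : (T†) (b (P i)) = b i := by
  refine b.ext_inner fun j => ?_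
  rw [ContinuousLinearMap.adjoint_inner_right]
  obtain rfl | hji := eq_or_ne j i
  · simp only [hT.apply_of_mem j hi, inner_self_eq_norm_sq_to_K, b.orthonormal.1]
  rw [b.orthonormal.inner_eq_zero hji]
  by_cases hj : j ∈ D
  · rw [hT.apply_of_mem j hj, b.orthonormal.inner_eq_zero (hP.ne hj hi hji)]
  · rw [hT.apply_of_notMem j hj, inner_zero_left]

theorem IsPartialShift.adjoin_le_reducingOperators (hT₁ : b.IsPartialShift P D T₁)
    (hT₂ : b.IsPartialShift P D' T₂) (hE : P ⁻¹' E = E) :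
    NonUnitalStarAlgebra.adjoin 𝕜 {T₁† * T₂†, T₂†} ≤
      (Submodule.span 𝕜 (b '' E)).topologicalClosure.reducingOperators := by
  have h₁ := hT₁.mem_reducingOperators hE
  have h₂ := hT₂.mem_reducingOperators hE
  refine NonUnitalStarAlgebra.adjoin_le ?_
  rintro _ (rfl | rfl) <;> simp only [← ContinuousLinearMap.star_eq_adjoint]
  · exact mul_mem (star_mem h₁) (star_mem h₂)
  · exact star_mem h₂

theorem IsPartialShift.adjoint_mul_self_mul (hT₂ : b.IsPartialShift P D' T₂) (hP : InjOn P D')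
    (hT₁ : b.IsPartialShift P D T₁) (hD : MapsTo P D D') : T₂† * T₂ * T₁ = T₁ :=
  b.ext_continuousLinearMap fun i => by
    by_cases hi : i ∈ D
    · simp only [mul_apply_eq_comp, hT₁.apply_of_mem i hi,
        hT₂.apply_of_mem _ (hD hi), hT₂.adjoint_apply hP (hD hi)]
    · simp only [mul_apply_eq_comp, hT₁.apply_of_notMem i hi, map_zero]

theorem IsPartialShift.mem_adjoin (hT₁ : b.IsPartialShift P D T₁) (hT₂ : b.IsPartialShift P Dᶜ T₂)
    (hP : InjOn P Dᶜ) (hD : MapsTo P D Dᶜ) :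
    T₁ ∈ NonUnitalStarAlgebra.adjoin 𝕜 {T₁† * T₂†, T₂†} ∧
      T₂ ∈ NonUnitalStarAlgebra.adjoin 𝕜 {T₁† * T₂†, T₂†} := by
  have h₁ := NonUnitalStarAlgebra.subset_adjoin 𝕜 {T₁† * T₂†, T₂†} (mem_insert _ _)
  have h₂ := NonUnitalStarAlgebra.subset_adjoin 𝕜 {T₁† * T₂†, T₂†} (mem_insert_of_mem _ rfl)
  have hT₁_eq : star (T₁† * T₂† * star (T₂†)) = T₁ := by
    simpa only [star_mul, star_star, ContinuousLinearMap.star_eq_adjoint,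
      ContinuousLinearMap.adjoint_adjoint, mul_assoc] using hT₂.adjoint_mul_self_mul hP hT₁ hD
  constructor
  · have h := star_mem (mul_mem h₁ (star_mem h₂))
    rwa [hT₁_eq] at h
  · simpa only [ContinuousLinearMap.star_eq_adjoint, ContinuousLinearMap.adjoint_adjoint]
      using star_mem h₂

end HilbertBasis

section Words

variable {ι 𝕜 H : Type*} [RCLike 𝕜] [NormedAddCommGroup H] [InnerProductSpace 𝕜 H]
  [CompleteSpace H] {𝒜 : NonUnitalStarSubalgebra 𝕜 (H →L[𝕜] H)} {v : ι → H} {P : ι → ι}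

theorem NonUnitalStarSubalgebra.exists_mem_apply_iterate
    (hstep : ∀ i, ∃ T ∈ 𝒜, T (v i) = v (P i) ∧ star T (v (P i)) = v i) (k : ℕ) (x : ι) :
    ∃ A ∈ 𝒜, A (v x) = v (P^[k] x) ∧ star A (v (P^[k] x)) = v x := by
  induction k with
  | zero =>
    obtain ⟨T, hT, hTx, hTx'⟩ := hstep x
    exact ⟨star T * T, mul_mem (star_mem hT) hT, by simp [mul_apply_eq_comp, hTx, hTx'],
      by simp [mul_apply_eq_comp, hTx, hTx']⟩
  | succ k ih =>
    obtain ⟨A, hA, hAx, hAx'⟩ := ih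
    obtain ⟨T, hT, hTx, hTx'⟩ := hstep (P^[k] x)
    refine ⟨T * A, mul_mem hT hA, ?_, ?_⟩
    · rw [mul_apply_eq_comp, hAx, hTx, Function.iterate_succ_apply']
    · rw [star_mul, mul_apply_eq_comp, Function.iterate_succ_apply', hTx', hAx']

theorem NonUnitalStarSubalgebra.exists_mem_apply_eq_of_orbEquiv
    (hstep : ∀ i, ∃ T ∈ 𝒜, T (v i) = v (P i) ∧ star T (v (P i)) = v i) {m n : ι}
    (h : orbEquiv P m n) : ∃ A ∈ 𝒜, A (v n) = v m := by
  obtain ⟨_, ⟨a, rfl⟩, ⟨c, hc⟩⟩ := h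
  obtain ⟨A, hA, hAn, -⟩ := exists_mem_apply_iterate hstep c n
  obtain ⟨B, hB, -, hBm⟩ := exists_mem_apply_iterate hstep a m
  refine ⟨star B * A, mul_mem (star_mem hB) hA, ?_⟩
  rw [mul_apply_eq_comp, hAn]
  exact (congrArg (fun w => star B (v w)) hc).trans hBm

end Words

theorem Submodule.closure_eq_closure_span_of_subset {R M : Type*} [Semiring R] [AddCommMonoid M]
    [Module R M] [TopologicalSpace M] {W : Submodule R M} {s : Set M}
    (hW : (W : Set M) ⊆ closure (span R s)) (hs : s ⊆ W) :
    closure (W : Set M) = closure (span R s) :=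
  (closure_minimal hW isClosed_closure).antisymm (closure_mono (span_le.mpr hs))

theorem HilbertBasis.closure_apply_cstarGen_eq {ι H : Type*} [NormedAddCommGroup H]
    [InnerProductSpace ℂ H] [CompleteSpace H] (b : HilbertBasis ι ℂ H) {P : ι → ι} {D : Set ι}
    {T₁ T₂ : H →L[ℂ] H} (hT₁ : b.IsPartialShift P D T₁) (hT₂ : b.IsPartialShift P Dᶜ T₂)
    (hP₁ : InjOn P D) (hP₂ : InjOn P Dᶜ) (hD : MapsTo P D Dᶜ) (n : ι) :
    closure ((fun A => A (b n)) '' CstarGen {T₁† * T₂†, T₂†}) =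
      closure (Submodule.span ℂ (b '' {m | orbEquiv P m n}) : Set H) := by
  set 𝒜 := NonUnitalStarAlgebra.adjoin ℂ {T₁† * T₂†, T₂†}
  set V := (Submodule.span ℂ (b '' {m | orbEquiv P m n})).topologicalClosure
  obtain ⟨hT₁𝒜, hT₂𝒜⟩ := hT₁.mem_adjoin hT₂ hP₂ hD
  have hstep : ∀ i, ∃ T ∈ 𝒜, T (b i) = b (P i) ∧ star T (b (P i)) = b i := by
    intro i
    simp only [ContinuousLinearMap.star_eq_adjoint]
    by_cases hi : i ∈ D
    · exact ⟨T₁, hT₁𝒜, hT₁.apply_of_mem i hi, hT₁.adjoint_apply hP₁ hi⟩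
    · exact ⟨T₂, hT₂𝒜, hT₂.apply_of_mem i hi, hT₂.adjoint_apply hP₂ hi⟩
  have h𝒜V : 𝒜 ≤ V.reducingOperators :=
    hT₁.adjoin_le_reducingOperators hT₂ (preimage_setOf_orbEquiv P n)
  have hbn : b n ∈ V := Submodule.le_topologicalClosure _
    (Submodule.subset_span (mem_image_of_mem b (orbEquiv_refl P n)))
  rw [CstarGen, closure_image_closure (by fun_prop : Continuous fun A : H →L[ℂ] H => A (b n))]
  refine Submodule.closure_eq_closure_span_of_subset
    (W := 𝒜.toNonUnitalSubalgebra.toSubmodule.map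
      (ContinuousLinearMap.apply ℂ H (b n) : (H →L[ℂ] H) →ₗ[ℂ] H)) ?_ ?_
  · rintro _ ⟨A, hA, rfl⟩
    rw [← Submodule.topologicalClosure_coe]
    exact (h𝒜V hA).1 hbn
  · rintro _ ⟨m, hm, rfl⟩
    exact 𝒜.exists_mem_apply_eq_of_orbEquiv hstep hm

theorem IsFirstReturn.eq_of_apply_mem {X : Type*} {f : X → X} {S : Set X} {x y : X}
    (h : IsFirstReturn f S x y) (hx : f x ∈ S) : y = f x := by
  obtain ⟨k, hk, -, rfl, hmin⟩ := h
  obtain rfl : k = 1 := by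
    by_contra hk1
    exact hmin 1 one_pos (by omega) hx
  rfl

section Collatz

theorem coe_collatz_of_odd {n : ℕ+} (h : (n : ℕ) % 2 = 1) : (collatz n : ℕ) = 3 * n + 1 := by
  simp [collatz, h]

theorem coe_collatz_of_even {n : ℕ+} (h : (n : ℕ) % 2 = 0) : (collatz n : ℕ) = n / 2 := by
  simp [collatz, h]

theorem odd_of_mem_N1 {n : ℕ+} (h : n ∈ N1) : (n : ℕ) % 2 = 1 := by
  rcases h with h | h <;> omega

theorem collatz_mem_N2 {n : ℕ+} (h : n ∈ N1) : collatz n ∈ N2 := by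
  have hc := coe_collatz_of_odd (odd_of_mem_N1 h)
  rcases h with h | h
  · exact Or.inl (by omega)
  · exact Or.inr (by omega)

theorem disjoint_N1_N2 : Disjoint N1 N2 :=
  Set.disjoint_left.mpr fun n h₁ h₂ => by
    rcases h₁ with h₁ | h₁ <;> rcases h₂ with h₂ | h₂ <;> omega

/-- An odd iterate before the first return would be prime to `3`, hence in `N₁`. -/
theorem iterate_collatz_mul_two_pow {x : ℕ+} (hx : x ∈ N2) {k : ℕ}
    (hmin : ∀ j, 0 < j → j < k → collatz^[j] x ∉ N1 ∪ N2) :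
    ∀ j ≤ k, (collatz^[j] x : ℕ) * 2 ^ j = x := by
  intro j
  induction j with
  | zero => simp
  | succ j ih =>
    intro hj
    have hc := ih (by omega)
    have hc3 : ¬ 3 ∣ (collatz^[j] x : ℕ) := fun h3 => by
      have := dvd_mul_of_dvd_left h3 (2 ^ j)
      rw [hc] at this
      rcases hx with h | h <;> omega
    have heven : (collatz^[j] x : ℕ) % 2 = 0 := by
      rcases Nat.eq_zero_or_pos j with rfl | hj0
      · rw [Function.iterate_zero_apply]
        rcases hx with h | h <;> omega
      · by_contra hodd
        exact hmin j hj0 (by omega) (Or.inl (by show _ ∨ _; omega))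
    rw [Function.iterate_succ_apply', coe_collatz_of_even heven, pow_succ', ← mul_assoc,
      Nat.div_mul_cancel (Nat.dvd_of_mod_eq_zero heven), hc]

/-- If two points of `N₂` had the same first return `z`, they would be `z * 2 ^ k` and
`z * 2 ^ l` with `k < l`, and the first would be an earlier return of the second. -/
theorem eq_of_isFirstReturn_of_mem_N2 {x y z : ℕ+} (hx : x ∈ N2) (hy : y ∈ N2)
    (hxz : IsFirstReturn collatz (N1 ∪ N2) x z) (hyz : IsFirstReturn collatz (N1 ∪ N2) y z) :
    x = y := by
  obtain ⟨k, hk0, -, hzx, hkmin⟩ := hxz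
  obtain ⟨l, hl0, -, hzy, hlmin⟩ := hyz
  have hk := iterate_collatz_mul_two_pow hx hkmin
  have hl := iterate_collatz_mul_two_pow hy hlmin
  wlog hkl : k ≤ l generalizing x y k l
  · exact (this hy hx l hl0 hzy hlmin k hk0 hzx hkmin hl hk (by omega)).symm
  have hxk : (z : ℕ) * 2 ^ k = x := hzx ▸ hk k le_rfl
  have hyl : (z : ℕ) * 2 ^ l = y := hzy ▸ hl l le_rfl
  obtain rfl | hlt := hkl.eq_or_lt
  · exact PNat.coe_injective (hxk.symm.trans hyl)
  have hyx : collatz^[l - k] y = x := by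
    refine PNat.coe_injective (Nat.eq_of_mul_eq_mul_right (pow_pos two_pos (l - k)) ?_)
    rw [hl (l - k) (Nat.sub_le l k), ← hyl, ← hxk, mul_assoc, ← pow_add, Nat.add_sub_cancel' hkl]
  exact (hlmin (l - k) (by omega) (by omega) (hyx ▸ Or.inr hx)).elim

variable {P : ↥(N1 ∪ N2) → ↥(N1 ∪ N2)}

theorem firstReturn_of_mem_N1
    (hP : ∀ x : ↥(N1 ∪ N2), IsFirstReturn collatz (N1 ∪ N2) ↑x ↑(P x))
    {x : ↥(N1 ∪ N2)} (hx : (x : ℕ+) ∈ N1) : (P x : ℕ+) = collatz x :=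
  (hP x).eq_of_apply_mem (Or.inr (collatz_mem_N2 hx))

theorem mapsTo_firstReturn_N1
    (hP : ∀ x : ↥(N1 ∪ N2), IsFirstReturn collatz (N1 ∪ N2) ↑x ↑(P x)) :
    MapsTo P {x | (x : ℕ+) ∈ N1} {x | (x : ℕ+) ∈ N1}ᶜ :=
  fun _ hx hPx => disjoint_N1_N2.ne_of_mem hPx (collatz_mem_N2 hx) (firstReturn_of_mem_N1 hP hx)

theorem injOn_firstReturn_N1
    (hP : ∀ x : ↥(N1 ∪ N2), IsFirstReturn collatz (N1 ∪ N2) ↑x ↑(P x)) :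
    InjOn P {x | (x : ℕ+) ∈ N1} := by
  intro x hx y hy hxy
  have h := congrArg (fun z : ↥(N1 ∪ N2) => ((z : ℕ+) : ℕ)) hxy
  simp only [firstReturn_of_mem_N1 hP hx, firstReturn_of_mem_N1 hP hy,
    coe_collatz_of_odd (odd_of_mem_N1 hx), coe_collatz_of_odd (odd_of_mem_N1 hy)] at h
  exact Subtype.ext (PNat.coe_injective (by omega))

theorem injOn_firstReturn_N2
    (hP : ∀ x : ↥(N1 ∪ N2), IsFirstReturn collatz (N1 ∪ N2) ↑x ↑(P x)) :
    InjOn P {x | (x : ℕ+) ∈ N1}ᶜ := fun x hx y hy hxy =>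
  Subtype.ext <| eq_of_isFirstReturn_of_mem_N2 (x.2.resolve_left hx) (y.2.resolve_left hy)
    (hP x) (hxy ▸ hP y)

end Collatz

/-- For every `n ∈ N₁ ∪ N₂`, the closure of `C*(S₁,S₂)·eₙ` equals the closed linear span
of `{eₘ : m ~ n}`, where `~` is the orbit equivalence relation induced by `P`. -/
theorem cstar_cuntz_orbit_span {H : Type*} [NormedAddCommGroup H] [InnerProductSpace ℂ H]
    [CompleteSpace H] (b : HilbertBasis ↥(N1 ∪ N2) ℂ H)
    (P : ↥(N1 ∪ N2) → ↥(N1 ∪ N2))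
    (hP : ∀ x : ↥(N1 ∪ N2), IsFirstReturn collatz (N1 ∪ N2) ↑x ↑(P x))
    (T1 T2 : H →L[ℂ] H)
    (hT1 : ∀ x : ↥(N1 ∪ N2), ((x : ℕ+) ∈ N1 → T1 (b x) = b (P x)) ∧
      ((x : ℕ+) ∈ N2 → T1 (b x) = 0))
    (hT2 : ∀ x : ↥(N1 ∪ N2), ((x : ℕ+) ∈ N2 → T2 (b x) = b (P x)) ∧
      ((x : ℕ+) ∈ N1 → T2 (b x) = 0))
    (S1 S2 : H →L[ℂ] H)
    (hS1 : S1 = ContinuousLinearMap.adjoint T1 * ContinuousLinearMap.adjoint T2)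
    (hS2 : S2 = ContinuousLinearMap.adjoint T2) (n : ↥(N1 ∪ N2)) :
    closure ((fun A => A (b n)) '' CstarGen {S1, S2}) =
      closure ((Submodule.span ℂ (b '' {m : ↥(N1 ∪ N2) | orbEquiv P m n}) :
        Submodule ℂ H) : Set H) := by
  have hT₁ : b.IsPartialShift P {x | (x : ℕ+) ∈ N1} T1 :=
    ⟨fun x hx => (hT1 x).1 hx, fun x hx => (hT1 x).2 (x.2.resolve_left hx)⟩
  have hT₂ : b.IsPartialShift P {x | (x : ℕ+) ∈ N1}ᶜ T2 :=
    ⟨fun x hx => (hT2 x).1 (x.2.resolve_left hx), fun x hx => (hT2 x).2 (not_not.mp hx)⟩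
  subst hS1 hS2
  exact b.closure_apply_cstarGen_eq hT₁ hT₂ (injOn_firstReturn_N1 hP) (injOn_firstReturn_N2 hP)
    (mapsTo_firstReturn_N1 hP) n
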